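/- Let S be a Bernstein set in the closed interval [0, 1/2], regarded as a subset of [0, 1]. Then in the Cantor game on [0, 1] with target set S, player B does not have a winning strategy, even though [0, 1] − S contains a generalized Cantor set, contains a nonempty perfect set, and is dense in [0, 1]. -/

import Mathlib

open Filter Set

/-- Data generating a generalized Cantor set: closed intervals
`I_{i₁,…,iₙ} = [c l, d l]` indexed by nonempty finite binary sequences
(`l : List Bool`, with the last entry the most recently added index),
inside a closed interval `[lo, hi]`, with diameters controlled by a strictly
decreasing positive sequence `e` tending to `0`. -/
structure GenCantor where
  lo : ℝ
  hi : ℝ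
  lo_lt_hi : lo < hi
  e : ℕ → ℝ
  e_pos : ∀ n : ℕ, 0 < e n
  e_anti : StrictAnti e
  e_lim : Filter.Tendsto e Filter.atTop (nhds 0)
  c : List Bool → ℝ
  d : List Bool → ℝ
  diam_pos : ∀ l : List Bool, l ≠ [] → 0 < d l - c l
  diam_lt : ∀ l : List Bool, l ≠ [] → d l - c l < e l.length
  root_sub : ∀ i : Bool, Set.Icc (c [i]) (d [i]) ⊆ Set.Icc lo hi
  nested : ∀ l : List Bool, l ≠ [] → ∀ i : Bool,
    Set.Icc (c (l ++ [i])) (d (l ++ [i])) ⊆ Set.Icc (c l) (d l)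
  disj : ∀ l : List Bool,
    Set.Icc (c (l ++ [false])) (d (l ++ [false])) ∩
      Set.Icc (c (l ++ [true])) (d (l ++ [true])) = ∅

/-- The generalized Cantor set generated by the data `G`:
`C = ⋂_{n ≥ 1} ⋃_{i₁,…,iₙ} I_{i₁,…,iₙ}`. -/
def GenCantor.C (G : GenCantor) : Set ℝ :=
  ⋂ n : ℕ, ⋃ l ∈ {l : List Bool | l.length = n + 1}, Set.Icc (G.c l) (G.d l)

/-- A set of reals is a generalized Cantor set if it is generated by some data. -/
def IsGenCantorSet (C : Set ℝ) : Prop := ∃ G : GenCantor, G.C = C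

/-- The length-`(n+1)` initial segment `[s 0, …, s n]` of a binary sequence. -/
def prefixSeq (s : ℕ → Bool) (n : ℕ) : List Bool := List.ofFn fun i : Fin (n + 1) => s i

/-- A set `P ⊆ ℝ` is perfect if it is closed and each of its points is a
limit point of `P`. -/
def PerfectSet (P : Set ℝ) : Prop := IsClosed P ∧ ∀ x ∈ P, x ∈ closure (P \ {x})

/-- A valid history for player A before A's move number `n+1`:
moves `a 0 = a₀ < a 1 < ⋯ < a n < b n < ⋯ < b 1 < b 0 = b₀`. -/
def ValidHistA (a₀ b₀ : ℝ) {n : ℕ} (a b : Fin (n + 1) → ℝ) : Prop :=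
  a 0 = a₀ ∧ b 0 = b₀ ∧ StrictMono a ∧ StrictAnti b ∧ a (Fin.last n) < b (Fin.last n)

/-- A strategy for player A in the Cantor game on `[a₀, b₀]`:
functions `f n` producing the move `a (n+1)` from the history
`(a 0, b 0, …, a n, b n)`, with `a n < f n a b < b n` on valid histories. -/
structure StratA (a₀ b₀ : ℝ) where
  f : (n : ℕ) → (Fin (n + 1) → ℝ) → (Fin (n + 1) → ℝ) → ℝ
  valid : ∀ (n : ℕ) (a b : Fin (n + 1) → ℝ), ValidHistA a₀ b₀ a b →
    a (Fin.last n) < f n a b ∧ f n a b < b (Fin.last n)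

/-- A valid history for player B before B's move number `n+1`:
`a 0 = a₀ < a 1 < ⋯ < a (n+1) < b n < ⋯ < b 1 < b 0 = b₀`. -/
def ValidHistB (a₀ b₀ : ℝ) {n : ℕ} (a : Fin (n + 2) → ℝ) (b : Fin (n + 1) → ℝ) : Prop :=
  a 0 = a₀ ∧ b 0 = b₀ ∧ StrictMono a ∧ StrictAnti b ∧ a (Fin.last (n + 1)) < b (Fin.last n)

/-- A strategy for player B in the Cantor game on `[a₀, b₀]`:
functions `g n` producing the move `b (n+1)` from the history
`(a 0, b 0, …, a n, b n, a (n+1))`, with `a (n+1) < g n a b < b n` on valid histories. -/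
structure StratB (a₀ b₀ : ℝ) where
  g : (n : ℕ) → (Fin (n + 2) → ℝ) → (Fin (n + 1) → ℝ) → ℝ
  valid : ∀ (n : ℕ) (a : Fin (n + 2) → ℝ) (b : Fin (n + 1) → ℝ), ValidHistB a₀ b₀ a b →
    a (Fin.last (n + 1)) < g n a b ∧ g n a b < b (Fin.last n)

/-- A play of the Cantor game on `[a₀, b₀]`:
`a (n-1) < a n < b n < b (n-1)` for all `n ≥ 1`. -/
def IsPlay (a₀ b₀ : ℝ) (a b : ℕ → ℝ) : Prop :=
  a 0 = a₀ ∧ b 0 = b₀ ∧ ∀ n : ℕ, a n < a (n + 1) ∧ a (n + 1) < b (n + 1) ∧ b (n + 1) < b n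

/-- A play is consistent with a strategy for A if each of A's moves is given by
the strategy applied to the preceding history. -/
def ConsistentA {a₀ b₀ : ℝ} (σ : StratA a₀ b₀) (a b : ℕ → ℝ) : Prop :=
  ∀ n : ℕ, a (n + 1) = σ.f n (fun i : Fin (n + 1) => a i) (fun i : Fin (n + 1) => b i)

/-- A play is consistent with a strategy for B if each of B's moves is given by
the strategy applied to the preceding history. -/
def ConsistentB {a₀ b₀ : ℝ} (σ : StratB a₀ b₀) (a b : ℕ → ℝ) : Prop :=
  ∀ n : ℕ, b (n + 1) = σ.g n (fun i : Fin (n + 2) => a i) (fun i : Fin (n + 1) => b i)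

/-- The limit set of a strategy for player A: all limits `lim aₙ` over plays
consistent with the strategy. -/
def limitSetA {a₀ b₀ : ℝ} (σ : StratA a₀ b₀) : Set ℝ :=
  {x | ∃ a b : ℕ → ℝ, IsPlay a₀ b₀ a b ∧ ConsistentA σ a b ∧
    Filter.Tendsto a Filter.atTop (nhds x)}

/-- The limit set of a strategy for player B: all limits `lim aₙ` over plays
consistent with the strategy. -/
def limitSetB {a₀ b₀ : ℝ} (σ : StratB a₀ b₀) : Set ℝ :=
  {x | ∃ a b : ℕ → ℝ, IsPlay a₀ b₀ a b ∧ ConsistentB σ a b ∧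
    Filter.Tendsto a Filter.atTop (nhds x)}

/-- A strategy for A is winning for target set `S` iff its limit set lies in `S`. -/
def WinningA {a₀ b₀ : ℝ} (σ : StratA a₀ b₀) (S : Set ℝ) : Prop := limitSetA σ ⊆ S

/-- A strategy for B is winning for target set `S` iff its limit set lies in
`[a₀, b₀] − S`. -/
def WinningB {a₀ b₀ : ℝ} (σ : StratB a₀ b₀) (S : Set ℝ) : Prop :=
  limitSetB σ ⊆ Set.Icc a₀ b₀ \ S

/-- `B` is a Bernstein set in `X ⊆ ℝ` (with its subspace topology) if `B ⊆ X` and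
neither `B` nor `X − B` contains a set that is uncountable and closed in `X`. -/
def IsBernsteinIn (X B : Set ℝ) : Prop :=
  B ⊆ X ∧
    (¬ ∃ T : Set ℝ, T ⊆ B ∧ ¬ T.Countable ∧ IsClosed (Subtype.val ⁻¹' T : Set X)) ∧
    (¬ ∃ T : Set ℝ, T ⊆ X \ B ∧ ¬ T.Countable ∧ IsClosed (Subtype.val ⁻¹' T : Set X))

/-- The set of right condensation points of `S` in `[a₀, b₀]`. -/
def rightCondPts (a₀ b₀ : ℝ) (S : Set ℝ) : Set ℝ :=
  {x ∈ Set.Icc a₀ b₀ | ∀ ε > 0, ¬ (Set.Ioo x (x + ε) ∩ S).Countable}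

/-!
Against any strategy `σ` of B, player A can confine play to `[0, 1/2]`: A keeps an interval
`(a n, hi)` with `hi ≤ b n`, and in each round moves into its left or right half, shrinking `hi`
to the end of that half. Each binary sequence of choices yields a play consistent with `σ`, and
the limits of these plays form a continuous injective image of the Cantor space `ℕ → Bool` in
`[0, 1/2]`, hence an uncountable closed set. A winning `σ` would put it inside `[0, 1/2] − S`,
which a Bernstein set forbids. The other claims only use that `S ⊆ [0, 1/2]` misses `[3/5, 4/5]`
and that a Bernstein set contains no nondegenerate interval, so its complement is dense.
-/

open Topology

lemma not_countable_Icc_real {u v : ℝ} (huv : u < v) : ¬ (Icc u v).Countable := by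
  rw [← Cardinal.le_aleph0_iff_set_countable, Cardinal.mk_Icc_real huv, not_le]
  exact Cardinal.aleph0_lt_continuum

lemma not_countable_range_of_injective {β : Type*} {f : (ℕ → Bool) → β} (hf : f.Injective) :
    ¬ (range f).Countable := by
  have : Uncountable (ℕ → Bool) := by
    rw [← Cardinal.aleph0_lt_mk_iff]
    simpa using Cardinal.aleph0_lt_continuum
  rw [← countable_coe_iff]
  exact fun h => not_countable (Equiv.ofInjective f hf).injective.countable

lemma Icc_subset_closure_Icc_diff {S : Set ℝ} (hS : Dense Sᶜ) {u v : ℝ} (huv : u < v) :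
    Icc u v ⊆ closure (Icc u v \ S) :=
  calc Icc u v = closure (Ioo u v) := (closure_Ioo huv.ne).symm
    _ ⊆ closure (closure (Ioo u v ∩ Sᶜ)) :=
      closure_mono (hS.open_subset_closure_inter isOpen_Ioo)
    _ = closure (Ioo u v ∩ Sᶜ) := closure_closure
    _ ⊆ closure (Icc u v \ S) := closure_mono fun _ hy => ⟨Ioo_subset_Icc_self hy.1, hy.2⟩

lemma perfectSet_Icc {u v : ℝ} (huv : u < v) : PerfectSet (Icc u v) :=
  ⟨isClosed_Icc, fun x hx => Icc_subset_closure_Icc_diff (dense_compl_singleton x) huv hx⟩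

lemma IsBernsteinIn.dense_compl {X S : Set ℝ} (hS : IsBernsteinIn X S) : Dense Sᶜ := by
  refine dense_iff_inter_open.2 fun U hU ⟨x, hx⟩ => ?_
  obtain ⟨l, w, ⟨hlx, hxw⟩, hsub⟩ := mem_nhds_iff_exists_Ioo_subset.1 (hU.mem_nhds hx)
  by_contra hUS
  refine hS.2.1 ⟨Icc x ((x + w) / 2), fun y hy => ?_, not_countable_Icc_real (by linarith),
    isClosed_Icc.preimage continuous_subtype_val⟩
  by_contra hyS
  exact hUS ⟨y, hsub ⟨by linarith [hy.1], by linarith [hy.2]⟩, hyS⟩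

lemma div_three_pow_eq (w : ℝ) (n : ℕ) : w / 3 ^ n = 3 * (w / 3 ^ (n + 1)) := by
  rw [pow_succ]; field_simp

namespace GenCantor

lemma C_subset_Icc (G : GenCantor) : G.C ⊆ Icc G.lo G.hi := by
  intro x hx
  obtain ⟨l, hl, hxl⟩ := mem_iUnion₂.1 (mem_iInter.1 hx 0)
  obtain ⟨i, rfl⟩ := List.length_eq_one_iff.1 hl
  exact G.root_sub i hxl

/-- Left endpoints of the middle-thirds intervals of `[u, u + w]`, indexed by the reversed
address (newest index first). -/
noncomputable def ternaryLeft (u w : ℝ) : List Bool → ℝ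
  | [] => u
  | i :: l => ternaryLeft u w l + if i then 2 * (w / 3 ^ (l.length + 1)) else 0

lemma ternaryLeft_reverse_append (u w : ℝ) (l : List Bool) (i : Bool) :
    ternaryLeft u w (l ++ [i]).reverse =
      ternaryLeft u w l.reverse + if i then 2 * (w / 3 ^ (l.length + 1)) else 0 := by
  simp [ternaryLeft]

lemma ternaryLeft_child_subset (u : ℝ) {w : ℝ} (hw : 0 < w) (l : List Bool) (i : Bool) :
    Icc (ternaryLeft u w (l ++ [i]).reverse)
        (ternaryLeft u w (l ++ [i]).reverse + w / 3 ^ (l ++ [i]).length) ⊆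
      Icc (ternaryLeft u w l.reverse) (ternaryLeft u w l.reverse + w / 3 ^ l.length) := by
  have := div_pos hw (pow_pos three_pos (l.length + 1))
  rw [ternaryLeft_reverse_append, List.length_append, List.length_singleton,
    div_three_pow_eq w l.length]
  apply Icc_subset_Icc <;> cases i <;> simp only [Bool.false_eq_true, if_true, if_false] <;>
    linarith

noncomputable def middleThirds (u v : ℝ) (huv : u < v) : GenCantor where
  lo := u
  hi := v
  lo_lt_hi := huv
  e n := 2 * (v - u) / 3 ^ n
  e_pos n := by have := sub_pos.2 huv; positivity
  e_anti m n hmn := div_lt_div_of_pos_left (by linarith) (by positivity)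
    (pow_lt_pow_right₀ (by norm_num) hmn)
  e_lim := tendsto_const_nhds.div_atTop (tendsto_pow_atTop_atTop_of_one_lt (by norm_num))
  c l := ternaryLeft u (v - u) l.reverse
  d l := ternaryLeft u (v - u) l.reverse + (v - u) / 3 ^ l.length
  diam_pos l _ := by have := sub_pos.2 huv; simp only [add_sub_cancel_left]; positivity
  diam_lt l _ := by
    have := sub_pos.2 huv
    simp only [add_sub_cancel_left, mul_div_assoc]
    linarith [div_pos this (pow_pos three_pos l.length)]
  root_sub i := by
    simpa [ternaryLeft] using ternaryLeft_child_subset u (sub_pos.2 huv) [] i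
  nested l _ i := ternaryLeft_child_subset u (sub_pos.2 huv) l i
  disj l := by
    have := div_pos (sub_pos.2 huv) (pow_pos three_pos (l.length + 1))
    refine eq_empty_iff_forall_notMem.2 fun x ⟨⟨_, hx₀⟩, ⟨hx₁, _⟩⟩ => ?_
    simp only [ternaryLeft_reverse_append, List.length_append, List.length_singleton] at hx₀ hx₁
    simp only [Bool.false_eq_true, if_false, if_true] at hx₀ hx₁
    linarith

end GenCantor

/-- A position of the game after `n` rounds, for a fixed `n` kept outside the structure: the
moves `a 0, …, a n` and `b 0, …, b n` (later entries are junk), and an upper bound `hi ≤ b n`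
below which player A keeps all of their future moves. -/
structure Position where
  a : ℕ → ℝ
  b : ℕ → ℝ
  hi : ℝ

namespace Position

variable {a₀ b₀ c : ℝ} (σ : StratB a₀ b₀) (n : ℕ) (p : Position) (i : Bool)

noncomputable def mid : ℝ := (p.a n + p.hi) / 2

/-- A's move, at a quarter or three quarters of `(a n, hi)`; `cap` is the new bound on the
half that contains it, which separates the two choices of `i`. -/
noncomputable def move : ℝ := if i then (p.mid n + p.hi) / 2 else (p.a n + p.mid n) / 2

noncomputable def cap : ℝ := if i then p.hi else p.mid n

noncomputable def nextA : ℕ → ℝ := Function.update p.a (n + 1) (p.move n i)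

noncomputable def reply : ℝ :=
  σ.g n (fun k : Fin (n + 2) => p.nextA n i k) (fun k : Fin (n + 1) => p.b k)

noncomputable def step : Position :=
  ⟨p.nextA n i, Function.update p.b (n + 1) (p.reply σ n i), min (p.reply σ n i) (p.cap n i)⟩

structure Valid (a₀ b₀ c : ℝ) (n : ℕ) (p : Position) : Prop where
  a_zero : p.a 0 = a₀
  b_zero : p.b 0 = b₀
  a_lt : ∀ k < n, p.a k < p.a (k + 1)
  b_lt : ∀ k < n, p.b (k + 1) < p.b k
  a_lt_hi : p.a n < p.hi
  hi_le_b : p.hi ≤ p.b n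
  hi_le : p.hi ≤ c
  hi_sub_le : p.hi - p.a n ≤ (c - a₀) / 4 ^ n

variable {n p}

lemma move_mem (h : p.a n < p.hi) : p.a n < p.move n i ∧ p.move n i < p.cap n i := by
  unfold move cap mid; split <;> constructor <;> linarith

lemma cap_le (h : p.a n < p.hi) : p.cap n i ≤ p.hi := by
  unfold cap mid; split <;> linarith

lemma cap_sub_move : p.cap n i - p.move n i = (p.hi - p.a n) / 4 := by
  unfold move cap mid; cases i <;> simp only [Bool.false_eq_true, if_true, if_false] <;> ring

lemma nextA_of_le {k : ℕ} (hk : k ≤ n) : p.nextA n i k = p.a k :=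
  Function.update_of_ne (by omega) _ _

lemma nextA_succ : p.nextA n i (n + 1) = p.move n i := Function.update_self _ _ _

lemma step_a_of_le {k : ℕ} (hk : k ≤ n) : (p.step σ n i).a k = p.a k := nextA_of_le i hk

lemma step_b_of_le {k : ℕ} (hk : k ≤ n) : (p.step σ n i).b k = p.b k :=
  Function.update_of_ne (by omega) _ _

lemma step_b_succ : (p.step σ n i).b (n + 1) = p.reply σ n i := Function.update_self _ _ _

lemma Valid.nextA_lt (h : Valid a₀ b₀ c n p) {k : ℕ} (hk : k < n + 1) :
    p.nextA n i k < p.nextA n i (k + 1) := by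
  rcases Nat.lt_or_ge k n with hkn | hkn
  · rw [nextA_of_le i hkn.le, nextA_of_le i hkn]
    exact h.a_lt k hkn
  · obtain rfl : k = n := by omega
    rw [nextA_of_le i le_rfl, nextA_succ]
    exact (move_mem i h.a_lt_hi).1

lemma Valid.validHistB (h : Valid a₀ b₀ c n p) :
    ValidHistB a₀ b₀ (fun k : Fin (n + 2) => p.nextA n i k) (fun k : Fin (n + 1) => p.b k) := by
  refine ⟨(nextA_of_le i n.zero_le).trans h.a_zero, h.b_zero,
    Fin.strictMono_iff_lt_succ.2 fun k => h.nextA_lt i k.isLt,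
    Fin.strictAnti_iff_succ_lt.2 fun k => h.b_lt k k.isLt, ?_⟩
  simp only [Fin.val_last, nextA_succ]
  calc p.move n i < p.cap n i := (move_mem i h.a_lt_hi).2
    _ ≤ p.hi := cap_le i h.a_lt_hi
    _ ≤ p.b n := h.hi_le_b

lemma Valid.reply_mem (h : Valid a₀ b₀ c n p) :
    p.move n i < p.reply σ n i ∧ p.reply σ n i < p.b n := by
  simpa [reply, nextA_succ] using σ.valid n _ _ (h.validHistB i)

lemma Valid.step (h : Valid a₀ b₀ c n p) : Valid a₀ b₀ c (n + 1) (p.step σ n i) := by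
  have hcap := (move_mem i h.a_lt_hi).2
  obtain ⟨hreply, hreply_lt⟩ := h.reply_mem σ i
  refine ⟨(step_a_of_le σ i n.zero_le).trans h.a_zero,
    (step_b_of_le σ i n.zero_le).trans h.b_zero, fun k hk => h.nextA_lt i hk, fun k hk => ?_,
    ?_, ?_, ?_, ?_⟩
  · rcases Nat.lt_or_ge k n with hkn | hkn
    · rw [step_b_of_le σ i hkn, step_b_of_le σ i hkn.le]
      exact h.b_lt k hkn
    · obtain rfl : k = n := by omega
      rw [step_b_succ, step_b_of_le σ i le_rfl]
      exact hreply_lt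
  · show p.nextA n i (n + 1) < min _ _
    rw [nextA_succ]
    exact lt_min hreply hcap
  · rw [step_b_succ]
    exact min_le_left _ _
  · exact (min_le_right _ _).trans ((cap_le i h.a_lt_hi).trans h.hi_le)
  · show min _ _ - p.nextA n i (n + 1) ≤ _
    rw [nextA_succ, pow_succ, ← div_div]
    calc min (p.reply σ n i) (p.cap n i) - p.move n i ≤ p.cap n i - p.move n i := by
          linarith [min_le_right (p.reply σ n i) (p.cap n i)]
      _ = (p.hi - p.a n) / 4 := cap_sub_move i
      _ ≤ (c - a₀) / 4 ^ n / 4 := by linarith [h.hi_sub_le]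

end Position

namespace StratB

open Position

variable {a₀ b₀ : ℝ} (σ : StratB a₀ b₀) (c : ℝ) (s : ℕ → Bool)

/-- The position after `n` rounds when A answers `σ` by choosing the `s k` side in round `k + 1`,
starting with the bound `hi = c`. -/
noncomputable def branch : ℕ → Position
  | 0 => ⟨fun _ => a₀, fun _ => b₀, c⟩
  | n + 1 => (branch n).step σ n (s n)

noncomputable def branchA (n : ℕ) : ℝ := (σ.branch c s n).a n

noncomputable def branchB (n : ℕ) : ℝ := (σ.branch c s n).b n

noncomputable def branchLim : ℝ := ⨆ n, σ.branchA c s n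

variable {c}

lemma valid_branch (hac : a₀ < c) (hcb : c ≤ b₀) (n : ℕ) :
    Valid a₀ b₀ c n (σ.branch c s n) := by
  induction n with
  | zero => exact ⟨rfl, rfl, nofun, nofun, hac, hcb, le_rfl, by simp [branch]⟩
  | succ n ih => exact ih.step σ (s n)

lemma branch_a_of_le {k m : ℕ} (hkm : k ≤ m) : (σ.branch c s m).a k = σ.branchA c s k := by
  induction m, hkm using Nat.le_induction with
  | base => rfl
  | succ m hkm ih => exact (step_a_of_le σ _ hkm).trans ih

lemma branch_b_of_le {k m : ℕ} (hkm : k ≤ m) : (σ.branch c s m).b k = σ.branchB c s k := by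
  induction m, hkm using Nat.le_induction with
  | base => rfl
  | succ m hkm ih => exact (step_b_of_le σ _ hkm).trans ih

lemma branch_eq_of_eqOn {t : ℕ → Bool} {n : ℕ} (h : ∀ k < n, s k = t k) :
    σ.branch c s n = σ.branch c t n := by
  induction n with
  | zero => rfl
  | succ n ih =>
    simp only [branch, h n n.lt_succ_self, ih fun k hk => h k (hk.trans n.lt_succ_self)]

lemma consistentB_branch : ConsistentB σ (σ.branchA c s) (σ.branchB c s) := by
  intro n
  show (σ.branch c s (n + 1)).b (n + 1) = _
  rw [branch, step_b_succ, reply]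
  congr 1 <;> funext k
  · exact σ.branch_a_of_le s (m := n + 1) (by omega)
  · exact σ.branch_b_of_le s (by omega)

variable (hac : a₀ < c) (hcb : c ≤ b₀)
include hac hcb

lemma isPlay_branch : IsPlay a₀ b₀ (σ.branchA c s) (σ.branchB c s) := by
  refine ⟨rfl, rfl, fun n => ?_⟩
  have h := σ.valid_branch s hac hcb (n + 1)
  have ha := h.a_lt n n.lt_succ_self
  have hb := h.b_lt n n.lt_succ_self
  rw [σ.branch_a_of_le s n.le_succ] at ha
  rw [σ.branch_b_of_le s n.le_succ] at hb
  exact ⟨ha, h.a_lt_hi.trans_le h.hi_le_b, hb⟩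

lemma strictMono_branchA : StrictMono (σ.branchA c s) :=
  strictMono_nat_of_lt_succ fun n => ((σ.isPlay_branch s hac hcb).2.2 n).1

lemma antitone_branch_hi : Antitone fun n => (σ.branch c s n).hi := by
  refine antitone_nat_of_succ_le fun n => ?_
  have h := σ.valid_branch s hac hcb n
  exact (min_le_right _ _).trans (cap_le _ h.a_lt_hi)

lemma branchA_lt_hi (m n : ℕ) : σ.branchA c s m < (σ.branch c s n).hi := by
  rcases le_total m n with hmn | hnm
  · exact ((σ.strictMono_branchA s hac hcb).monotone hmn).trans_lt
      (σ.valid_branch s hac hcb n).a_lt_hi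
  · exact (σ.valid_branch s hac hcb m).a_lt_hi.trans_le (σ.antitone_branch_hi s hac hcb hnm)

lemma bddAbove_range_branchA : BddAbove (range (σ.branchA c s)) :=
  ⟨_, forall_mem_range.2 fun m => (σ.branchA_lt_hi s hac hcb m 0).le⟩

lemma tendsto_branchA : Tendsto (σ.branchA c s) atTop (𝓝 (σ.branchLim c s)) :=
  tendsto_atTop_ciSup (σ.strictMono_branchA s hac hcb).monotone
    (σ.bddAbove_range_branchA s hac hcb)

lemma branchA_le_branchLim (n : ℕ) : σ.branchA c s n ≤ σ.branchLim c s :=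
  le_ciSup (σ.bddAbove_range_branchA s hac hcb) n

lemma branchLim_le_hi (n : ℕ) : σ.branchLim c s ≤ (σ.branch c s n).hi :=
  ciSup_le fun m => (σ.branchA_lt_hi s hac hcb m n).le

lemma branchLim_mem_limitSetB : σ.branchLim c s ∈ limitSetB σ :=
  ⟨_, _, σ.isPlay_branch s hac hcb, σ.consistentB_branch s, σ.tendsto_branchA s hac hcb⟩

lemma branchLim_mem_Icc : σ.branchLim c s ∈ Icc a₀ c :=
  ⟨σ.branchA_le_branchLim s hac hcb 0, σ.branchLim_le_hi s hac hcb 0⟩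

lemma abs_branchLim_sub_le {t : ℕ → Bool} {n : ℕ} (h : ∀ k < n, s k = t k) :
    |σ.branchLim c s - σ.branchLim c t| ≤ (c - a₀) / 4 ^ n := by
  have hs₁ := σ.branchA_le_branchLim s hac hcb n
  have hs₂ := σ.branchLim_le_hi s hac hcb n
  have ht₁ := σ.branchA_le_branchLim t hac hcb n
  have ht₂ := σ.branchLim_le_hi t hac hcb n
  simp only [branchA, ← σ.branch_eq_of_eqOn s h] at hs₁ ht₁ ht₂
  have hlen := (σ.valid_branch s hac hcb n).hi_sub_le
  rw [abs_sub_le_iff]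
  constructor <;> linarith

/-- Branches that first differ in round `n + 1` are separated by the midpoint chosen there. -/
lemma branchLim_lt {t : ℕ → Bool} {n : ℕ} (h : ∀ k < n, s k = t k) (hs : s n = false)
    (ht : t n = true) : σ.branchLim c s < σ.branchLim c t := by
  set p := σ.branch c s n
  have hp := σ.valid_branch s hac hcb n
  have hmid : p.mid n < p.move n true := by
    simp only [move, mid, if_true]; linarith [hp.a_lt_hi]
  have hs' : (σ.branch c s (n + 1)).hi ≤ p.mid n := by
    simp only [branch, step, hs]; exact min_le_right _ _
  have ht' : σ.branchA c t (n + 1) = p.move n true := by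
    simp only [branchA, branch, step, ht, ← σ.branch_eq_of_eqOn s h, nextA_succ, p]
  calc σ.branchLim c s ≤ (σ.branch c s (n + 1)).hi := σ.branchLim_le_hi s hac hcb _
    _ < σ.branchA c t (n + 1) := by linarith
    _ ≤ σ.branchLim c t := σ.branchA_le_branchLim t hac hcb _

lemma injective_branchLim : Function.Injective (σ.branchLim c) := by
  intro s t hst
  by_contra hne
  have hlt : ∀ k < PiNat.firstDiff s t, s k = t k := fun k hk => PiNat.apply_eq_of_lt_firstDiff hk
  have hdiff := PiNat.apply_firstDiff_ne hne
  cases hsn : s (PiNat.firstDiff s t) <;> cases htn : t (PiNat.firstDiff s t) <;>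
    simp only [hsn, htn, ne_eq, not_true_eq_false] at hdiff
  · exact (σ.branchLim_lt s hac hcb hlt hsn htn).ne hst
  · exact (σ.branchLim_lt t hac hcb (fun k hk => (hlt k hk).symm) htn hsn).ne hst.symm

lemma continuous_branchLim : Continuous (σ.branchLim c) := by
  refine continuous_iff_continuousAt.2 fun s => Metric.tendsto_nhds.2 fun ε hε => ?_
  have hsmall : Tendsto (fun n : ℕ => (c - a₀) / 4 ^ n) atTop (𝓝 0) :=
    tendsto_const_nhds.div_atTop (tendsto_pow_atTop_atTop_of_one_lt (by norm_num))
  obtain ⟨n, hn⟩ := (hsmall.eventually (gt_mem_nhds hε)).exists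
  filter_upwards [(PiNat.isOpen_cylinder _ s n).mem_nhds (PiNat.self_mem_cylinder s n)] with t ht
  rw [Real.dist_eq]
  exact (σ.abs_branchLim_sub_le t hac hcb ht).trans_lt hn

end StratB

theorem StratB.not_winningB_of_isBernsteinIn {a₀ b₀ c : ℝ} (σ : StratB a₀ b₀)
    (hac : a₀ < c) (hcb : c ≤ b₀) {S : Set ℝ} (hS : IsBernsteinIn (Icc a₀ c) S) :
    ¬ WinningB σ S := by
  intro hσ
  refine hS.2.2 ⟨range (σ.branchLim c), ?_,
    not_countable_range_of_injective (σ.injective_branchLim hac hcb),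
    (isCompact_range (σ.continuous_branchLim hac hcb)).isClosed.preimage
      continuous_subtype_val⟩
  rintro _ ⟨s, rfl⟩
  exact ⟨σ.branchLim_mem_Icc s hac hcb, (hσ (σ.branchLim_mem_limitSetB s hac hcb)).2⟩

/-- For a Bernstein set `S` in `[0, 1/2]`, viewed inside `[0, 1]`,
player B has no winning strategy in the Cantor game on `[0, 1]` with target `S`,
even though `[0, 1] − S` contains a generalized Cantor set, contains a nonempty
perfect set, and is dense in `[0, 1]`. -/
theorem stmt17 (S : Set ℝ) (hS : IsBernsteinIn (Set.Icc (0 : ℝ) (1 / 2)) S) :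
    (¬ ∃ σ : StratB (0 : ℝ) 1, WinningB σ S) ∧
    (∃ C : Set ℝ, IsGenCantorSet C ∧ C ⊆ Set.Icc (0 : ℝ) 1 \ S) ∧
    (∃ P : Set ℝ, P.Nonempty ∧ PerfectSet P ∧ P ⊆ Set.Icc (0 : ℝ) 1 \ S) ∧
    Set.Icc (0 : ℝ) 1 ⊆ closure (Set.Icc (0 : ℝ) 1 \ S) := by
  have hfar : Icc (3 / 5 : ℝ) (4 / 5) ⊆ Icc 0 1 \ S := fun y hy =>
    ⟨⟨by linarith [hy.1], by linarith [hy.2]⟩, fun hyS => by linarith [(hS.1 hyS).2, hy.1]⟩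
  refine ⟨?_, ⟨_, ⟨GenCantor.middleThirds (3 / 5) (4 / 5) (by norm_num), rfl⟩,
      (GenCantor.C_subset_Icc _).trans hfar⟩,
    ⟨Icc (3 / 5) (4 / 5), nonempty_Icc.2 (by norm_num), perfectSet_Icc (by norm_num), hfar⟩,
    Icc_subset_closure_Icc_diff hS.dense_compl zero_lt_one⟩
  rintro ⟨σ, hσ⟩
  exact σ.not_winningB_of_isBernsteinIn (c := 1 / 2) (by norm_num) (by norm_num) hS hσ
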